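/- arXiv:1805.12317 — 2 statements merged into one kernel-verified Lean document; each statement's English description precedes it below -/
import Mathlib

section
/- Let S ⊆ X be measurable with D(S) ≥ γ for some γ > 0, and suppose the function x ↦ (1 - 2·y(x))·1_S(x) belongs to the class C. If the measurable hypothesis f : X → [0,1] is (C,α)-multiaccurate, then the classification error of f on S satisfies er_S(f;y) ≤ 2·α/γ. -/
open MeasureTheory ProbabilityTheory

/-!
On `S` the test `(1 - 2y)·1_S` times the residual `f - y` is exactly `|f - y|`, which is at
least `1/2` wherever the thresholded prediction is wrong. Markov's inequality then bounds
`D(S ∩ {f̄ ≠ y})` by `2α`, and dividing by `D(S) ≥ γ` gives the conditional error bound.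
-/

lemma sign_mul_sub_eq_abs_sub {y f : ℝ} (hy : y = 0 ∨ y = 1) (hf : f ∈ Set.Icc (0 : ℝ) 1) :
    (1 - 2 * y) * (f - y) = |f - y| := by
  obtain ⟨hf0, hf1⟩ := hf
  rcases hy with rfl | rfl
  · rw [abs_of_nonneg] <;> linarith
  · rw [abs_of_nonpos] <;> linarith

lemma half_le_abs_sub_of_threshold_ne {y f : ℝ} (hy : y = 0 ∨ y = 1)
    (h : (if f > 1/2 then (1 : ℝ) else 0) ≠ y) : 1/2 ≤ |f - y| := by
  rcases hy with rfl | rfl <;> split_ifs at h with hf <;> norm_num at h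
  · rw [abs_of_pos] <;> linarith
  · rw [abs_of_nonpos] <;> linarith

lemma abs_sub_le_one_of_binary {y f : ℝ} (hy : y = 0 ∨ y = 1) (hf : f ∈ Set.Icc (0 : ℝ) 1) :
    |f - y| ≤ 1 := by
  rw [← sign_mul_sub_eq_abs_sub hy hf]
  obtain ⟨hf0, hf1⟩ := hf
  rcases hy with rfl | rfl <;> linarith

section MeasureBounds

variable {Ω : Type*} [MeasurableSpace Ω] {μ : Measure Ω}

lemma measureReal_le_integral_div_of_subset [IsFiniteMeasure μ] {g : Ω → ℝ} {t : Set Ω}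
    (hg_nonneg : 0 ≤ᵐ[μ] g) (hg : Integrable g μ) {ε : ℝ} (hε : 0 < ε)
    (ht : t ⊆ {x | ε ≤ g x}) : μ.real t ≤ (∫ x, g x ∂μ) / ε := by
  rw [le_div_iff₀ hε, mul_comm]
  calc ε * μ.real t ≤ ε * μ.real {x | ε ≤ g x} := by gcongr; exact measure_ne_top μ _
    _ ≤ ∫ x, g x ∂μ := mul_meas_ge_le_integral_of_nonneg hg_nonneg hg ε

lemma cond_toReal_le_measureReal_inter_div {s : Set Ω} (hs : MeasurableSet s) (t : Set Ω)
    {γ : ℝ} (hγ : 0 < γ) (hγs : γ ≤ μ.real s) : (μ[t | s]).toReal ≤ μ.real (s ∩ t) / γ := by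
  rw [cond_apply hs, ENNReal.toReal_mul, ENNReal.toReal_inv, inv_mul_eq_div]
  exact div_le_div_of_nonneg_left measureReal_nonneg hγ hγs

end MeasureBounds

theorem multiaccuracy_exact_test_classification_error_general
    {X : Type*} [MeasurableSpace X] (D : Measure X) [IsProbabilityMeasure D]
    (y f : X → ℝ) (hy : Measurable y) (hy01 : ∀ x, y x = 0 ∨ y x = 1)
    (hf : Measurable f) (hf01 : ∀ x, f x ∈ Set.Icc (0 : ℝ) 1)
    (C : Set (X → ℝ))
    (α γ : ℝ) (hγ : 0 < γ)
    (S : Set X) (hS : MeasurableSet S) (hSγ : γ ≤ (D S).toReal)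
    (hmem : (fun x => (1 - 2 * y x) * S.indicator (fun _ => (1 : ℝ)) x) ∈ C)
    (hMA : ∀ c ∈ C, ∫ x, c x * (f x - y x) ∂D ≤ α) :
    ((D[|S]) {x | (if f x > 1/2 then (1 : ℝ) else 0) ≠ y x}).toReal ≤ 2 * α / γ := by
  set E : Set X := {x | (if f x > 1/2 then (1 : ℝ) else 0) ≠ y x}
  set g : X → ℝ := fun x => (1 - 2 * y x) * S.indicator (fun _ => (1 : ℝ)) x * (f x - y x)
  have hg_eq : g = S.indicator (fun x => |f x - y x|) := funext fun x => by
    by_cases hx : x ∈ S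
    · simp [g, hx, sign_mul_sub_eq_abs_sub (hy01 x) (hf01 x)]
    · simp [g, hx]
  have hg_int : Integrable g D := by
    rw [hg_eq]
    refine (Integrable.of_bound (hf.sub hy).abs.aestronglyMeasurable 1 ?_).indicator hS
    exact .of_forall fun x => by simpa using abs_sub_le_one_of_binary (hy01 x) (hf01 x)
  have hg_nonneg : 0 ≤ᵐ[D] g := .of_forall fun x => by
    rw [hg_eq]; exact Set.indicator_nonneg (fun _ _ => abs_nonneg _) x
  have herr_sub : S ∩ E ⊆ {x | 1/2 ≤ g x} := by
    rintro x ⟨hxS, hxE⟩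
    simpa [hg_eq, hxS] using half_le_abs_sub_of_threshold_ne (hy01 x) hxE
  have hint : ∫ x, g x ∂D ≤ α := by simpa [g, mul_assoc] using hMA _ hmem
  have herr : D.real (S ∩ E) ≤ 2 * α := by
    have := measureReal_le_integral_div_of_subset hg_nonneg hg_int one_half_pos herr_sub
    linarith
  calc _ ≤ D.real (S ∩ E) / γ := cond_toReal_le_measureReal_inter_div hS E hγ hSγ
    _ ≤ 2 * α / γ := by gcongr

/-- If the test `(1 - 2y)·1_S` belongs to the class `C`, then any
`(C,α)`-multiaccurate hypothesis has classification error at most `2α/γ` on `S`. -/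
theorem multiaccuracy_exact_test_classification_error
    {X : Type*} [MeasurableSpace X] (D : Measure X) [IsProbabilityMeasure D]
    (y f : X → ℝ) (hy : Measurable y) (hy01 : ∀ x, y x = 0 ∨ y x = 1)
    (hf : Measurable f) (hf01 : ∀ x, f x ∈ Set.Icc (0 : ℝ) 1)
    (C : Set (X → ℝ)) (hC : ∀ c ∈ C, Measurable c ∧ ∀ x, c x ∈ Set.Icc (-1 : ℝ) 1)
    (α γ : ℝ) (hα : 0 ≤ α) (hγ : 0 < γ)
    (S : Set X) (hS : MeasurableSet S) (hSγ : γ ≤ (D S).toReal)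
    (hmem : (fun x => (1 - 2 * y x) * S.indicator (fun _ => (1 : ℝ)) x) ∈ C)
    (hMA : ∀ c ∈ C, ∫ x, c x * (f x - y x) ∂D ≤ α) :
    ((D[|S]) {x | (if f x > 1/2 then (1 : ℝ) else 0) ≠ y x}).toReal ≤ 2 * α / γ :=
  multiaccuracy_exact_test_classification_error_general D y f hy hy01 hf hf01 C α γ hγ S hS hSγ hmem
    hMA
end

section
/- Let f : X → (0,1) and c : X → ℝ be measurable with |η·c(x)| ≤ 1 for all x and η > 0, and let f' be the multiplicative-weights update of f by c with step η. If ℓ_D(f;y) and ℓ_D(f';y) are finite and c·(f−y) and c² are integrable with respect to D, then ℓ_D(f;y) − ℓ_D(f';y) ≥ η·E[c(x)·(f(x) − y(x))] − η²·E[c(x)²]. -/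
/-!
Pointwise, with `t = -η c(x)` and normalizer `Z = 1 - f + f eᵗ`, one has
`log f' = log f + t - log Z` and `log (1 - f') = log (1 - f) - log Z`, so the loss drops by exactly
`y t - log Z`. Since `log Z ≤ Z - 1 = f (eᵗ - 1) ≤ f t + t²` for `|t| ≤ 1`, the drop is at least
`-t (f - y) - t²`; integrating gives the theorem.
-/

open MeasureTheory Real

noncomputable section

def crossEntropy (y p : ℝ) : ℝ := -y * log p - (1 - y) * log (1 - p)

def mwNormalizer (p t : ℝ) : ℝ := 1 - p + p * exp t

def mwUpdate (p t : ℝ) : ℝ := p * exp t / mwNormalizer p t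

section

variable {p : ℝ} (hp : p ∈ Set.Ioo (0 : ℝ) 1) (t : ℝ)
include hp

lemma mwNormalizer_pos : 0 < mwNormalizer p t := by
  have := hp.2
  unfold mwNormalizer
  nlinarith [mul_pos hp.1 (exp_pos t)]

lemma log_mwUpdate : log (mwUpdate p t) = log p + t - log (mwNormalizer p t) := by
  rw [mwUpdate, log_div (mul_pos hp.1 (exp_pos t)).ne' (mwNormalizer_pos hp t).ne',
    log_mul hp.1.ne' (exp_ne_zero t), log_exp]

lemma log_one_sub_mwUpdate :
    log (1 - mwUpdate p t) = log (1 - p) - log (mwNormalizer p t) := by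
  have hZ := mwNormalizer_pos hp t
  have h1 : 1 - mwUpdate p t = (1 - p) / mwNormalizer p t := by
    rw [mwUpdate, one_sub_div hZ.ne', mwNormalizer]
    ring
  rw [h1, log_div (sub_pos.mpr hp.2).ne' hZ.ne']

lemma crossEntropy_sub_crossEntropy_mwUpdate (y : ℝ) :
    crossEntropy y p - crossEntropy y (mwUpdate p t) = y * t - log (mwNormalizer p t) := by
  rw [crossEntropy, crossEntropy, log_mwUpdate hp, log_one_sub_mwUpdate hp]
  ring

lemma log_mwNormalizer_le {t : ℝ} (ht : |t| ≤ 1) : log (mwNormalizer p t) ≤ p * t + t ^ 2 := by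
  have hexp : exp t ≤ 1 + t + t ^ 2 := by
    linarith [(abs_le.mp (abs_exp_sub_one_sub_id_le ht)).2]
  calc log (mwNormalizer p t) ≤ mwNormalizer p t - 1 := log_le_sub_one_of_pos (mwNormalizer_pos hp t)
    _ = p * (exp t - 1) := by rw [mwNormalizer]; ring
    _ ≤ p * (t + t ^ 2) := mul_le_mul_of_nonneg_left (by linarith) hp.1.le
    _ ≤ p * t + t ^ 2 := by nlinarith [hp.2, sq_nonneg t]

lemma crossEntropy_sub_crossEntropy_mwUpdate_ge {t : ℝ} (ht : |t| ≤ 1) (y : ℝ) :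
    -t * (p - y) - t ^ 2 ≤ crossEntropy y p - crossEntropy y (mwUpdate p t) := by
  rw [crossEntropy_sub_crossEntropy_mwUpdate hp]
  linarith [log_mwNormalizer_le hp ht]

end

end

theorem mw_expected_progress_general
    {X : Type*} [MeasurableSpace X] (D : Measure X)
    (y f c : X → ℝ) (hf01 : ∀ x, f x ∈ Set.Ioo (0 : ℝ) 1)
    (η : ℝ) (hηc : ∀ x, |η * c x| ≤ 1)
    (f' : X → ℝ)
    (hf' : ∀ x, f' x = f x * Real.exp (-η * c x) / (1 - f x + f x * Real.exp (-η * c x)))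
    (hℓf : Integrable (fun x => -(y x) * Real.log (f x) - (1 - y x) * Real.log (1 - f x)) D)
    (hℓf' : Integrable (fun x => -(y x) * Real.log (f' x) - (1 - y x) * Real.log (1 - f' x)) D)
    (hint₁ : Integrable (fun x => c x * (f x - y x)) D)
    (hint₂ : Integrable (fun x => (c x)^2) D) :
    (∫ x, (-(y x) * Real.log (f x) - (1 - y x) * Real.log (1 - f x)) ∂D)
      - (∫ x, (-(y x) * Real.log (f' x) - (1 - y x) * Real.log (1 - f' x)) ∂D)
      ≥ η * ∫ x, c x * (f x - y x) ∂D - η^2 * ∫ x, (c x)^2 ∂D := by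
  obtain rfl : f' = fun x => mwUpdate (f x) (-η * c x) := funext hf'
  have pointwise (x : X) : η * (c x * (f x - y x)) - η ^ 2 * c x ^ 2 ≤
      crossEntropy (y x) (f x) - crossEntropy (y x) (mwUpdate (f x) (-η * c x)) := by
    have ht : |-η * c x| ≤ 1 := by rw [neg_mul, abs_neg]; exact hηc x
    convert crossEntropy_sub_crossEntropy_mwUpdate_ge (hf01 x) ht (y x) using 1
    ring
  rw [← integral_const_mul, ← integral_const_mul, ← integral_sub hℓf hℓf',
    ← integral_sub (hint₁.const_mul η) (hint₂.const_mul (η ^ 2))]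
  exact integral_mono ((hint₁.const_mul η).sub (hint₂.const_mul (η ^ 2))) (hℓf.sub hℓf') pointwise

/-- Progress of the multiplicative-weights update in expected cross-entropy loss. -/
theorem mw_expected_progress
    {X : Type*} [MeasurableSpace X] (D : Measure X) [IsProbabilityMeasure D]
    (y f c : X → ℝ) (hy : Measurable y) (hy01 : ∀ x, y x = 0 ∨ y x = 1)
    (hf : Measurable f) (hf01 : ∀ x, f x ∈ Set.Ioo (0 : ℝ) 1)
    (hc : Measurable c) (η : ℝ) (hη : 0 < η) (hηc : ∀ x, |η * c x| ≤ 1)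
    (f' : X → ℝ)
    (hf' : ∀ x, f' x = f x * Real.exp (-η * c x) / (1 - f x + f x * Real.exp (-η * c x)))
    (hℓf : Integrable (fun x => -(y x) * Real.log (f x) - (1 - y x) * Real.log (1 - f x)) D)
    (hℓf' : Integrable (fun x => -(y x) * Real.log (f' x) - (1 - y x) * Real.log (1 - f' x)) D)
    (hint₁ : Integrable (fun x => c x * (f x - y x)) D)
    (hint₂ : Integrable (fun x => (c x)^2) D) :
    (∫ x, (-(y x) * Real.log (f x) - (1 - y x) * Real.log (1 - f x)) ∂D)
      - (∫ x, (-(y x) * Real.log (f' x) - (1 - y x) * Real.log (1 - f' x)) ∂D)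
      ≥ η * ∫ x, c x * (f x - y x) ∂D - η^2 * ∫ x, (c x)^2 ∂D :=
  mw_expected_progress_general D y f c hf01 η hηc f' hf' hℓf hℓf' hint₁ hint₂
end
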